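/- arXiv:1406.3390 — 4 statements merged into one kernel-verified Lean document; each statement's English description precedes it below -/
import Mathlib

section
/- Let α, p ∈ (0,1) with either (α > 1/2 and 1/2 < p < α) or (α < 1/2 and α < p < 1/2), and set σ = (1−p)/p and r = σ^{−1}(1−α) + σα. Then r < 1 and (2·(1−r)^{−1} − 1)^{−1} = (2p−1)(α−p)/(α(1−p)+(1−α)p), and this quantity is strictly positive. -/
/-!
Writing `D = (2p-1)(α-p)` and `E = α(1-p) + (1-α)p`, a direct computation gives
`1 - r = D / (p(1-p))` and `2p(1-p) - D = E`, so the drift equals `D / E`.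
In both cases `2p - 1` and `α - p` have the same sign, hence `D > 0`, while `E > 0`
as a convex combination of `1 - p` and `p`.
-/

namespace SwapEnvironment

noncomputable def σ (p : ℝ) : ℝ := (1 - p) / p

noncomputable def r (α p : ℝ) : ℝ := (σ p)⁻¹ * (1 - α) + σ p * α

variable {α p : ℝ}

theorem one_sub_r (hp0 : p ≠ 0) (hp1 : p ≠ 1) :
    1 - r α p = (2 * p - 1) * (α - p) / (p * (1 - p)) := by
  have : 1 - p ≠ 0 := sub_ne_zero.mpr hp1.symm
  unfold r σ
  field_simp
  ring

theorem drift_eq (hp0 : p ≠ 0) (hp1 : p ≠ 1) (hD : (2 * p - 1) * (α - p) ≠ 0) :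
    (2 * (1 - r α p)⁻¹ - 1)⁻¹ = (2 * p - 1) * (α - p) / (α * (1 - p) + (1 - α) * p) := by
  obtain ⟨_, _⟩ := mul_ne_zero_iff.mp hD
  have h2S : 2 * (p * (1 - p) / ((2 * p - 1) * (α - p))) - 1
      = (α * (1 - p) + (1 - α) * p) / ((2 * p - 1) * (α - p)) := by
    field_simp
    ring
  rw [one_sub_r hp0 hp1, inv_div, h2S, inv_div]

theorem bias_pos
    (hcase : (1 / 2 < α ∧ 1 / 2 < p ∧ p < α) ∨ (α < 1 / 2 ∧ α < p ∧ p < 1 / 2)) :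
    0 < (2 * p - 1) * (α - p) := by
  rcases hcase with ⟨-, hp, hpα⟩ | ⟨-, hαp, hp⟩
  · exact mul_pos (by linarith) (by linarith)
  · exact mul_pos_of_neg_of_neg (by linarith) (by linarith)

theorem convex_combination_pos (hα0 : 0 < α) (hα1 : α < 1) (hp0 : 0 < p) (hp1 : p < 1) :
    0 < α * (1 - p) + (1 - α) * p :=
  add_pos (mul_pos hα0 (by linarith)) (mul_pos (by linarith) hp0)

end SwapEnvironment

open SwapEnvironment in
theorem stmt3_general (α p : ℝ) (hα0 : 0 < α) (hα1 : α < 1)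
    (hcase : (1 / 2 < α ∧ 1 / 2 < p ∧ p < α) ∨ (α < 1 / 2 ∧ α < p ∧ p < 1 / 2)) :
    ((1 - p) / p)⁻¹ * (1 - α) + ((1 - p) / p) * α < 1 ∧
    (2 * (1 - (((1 - p) / p)⁻¹ * (1 - α) + ((1 - p) / p) * α))⁻¹ - 1)⁻¹
      = (2 * p - 1) * (α - p) / (α * (1 - p) + (1 - α) * p) ∧
    0 < (2 * (1 - (((1 - p) / p)⁻¹ * (1 - α) + ((1 - p) / p) * α))⁻¹ - 1)⁻¹ := by
  obtain ⟨hp0, hp1⟩ : 0 < p ∧ p < 1 := by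
    rcases hcase with ⟨_, _, _⟩ | ⟨_, _, _⟩ <;> constructor <;> linarith
  have hD := bias_pos hcase
  have hE := convex_combination_pos hα0 hα1 hp0 hp1
  have hdrift := drift_eq hp0.ne' hp1.ne hD.ne'
  refine ⟨?_, hdrift, hdrift ▸ div_pos hD hE⟩
  have : 0 < 1 - r α p := by
    rw [one_sub_r hp0.ne' hp1.ne]
    exact div_pos hD (mul_pos hp0 (by linarith))
  exact sub_pos.mp this

/-- For `α, p ∈ (0,1)` with either (`α > 1/2` and `1/2 < p < α`) or
(`α < 1/2` and `α < p < 1/2`), setting `σ = (1-p)/p` and `r = σ⁻¹ (1-α) + σ α`, one has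
`r < 1`, `(2 (1-r)⁻¹ - 1)⁻¹ = (2p-1)(α-p)/(α(1-p)+(1-α)p)`, and this quantity is
strictly positive. -/
theorem stmt3 (α p : ℝ) (hα0 : 0 < α) (hα1 : α < 1) (hp0 : 0 < p) (hp1 : p < 1)
    (hcase : (1 / 2 < α ∧ 1 / 2 < p ∧ p < α) ∨ (α < 1 / 2 ∧ α < p ∧ p < 1 / 2)) :
    ((1 - p) / p)⁻¹ * (1 - α) + ((1 - p) / p) * α < 1 ∧
    (2 * (1 - (((1 - p) / p)⁻¹ * (1 - α) + ((1 - p) / p) * α))⁻¹ - 1)⁻¹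
      = (2 * p - 1) * (α - p) / (α * (1 - p) + (1 - α) * p) ∧
    0 < (2 * (1 - (((1 - p) / p)⁻¹ * (1 - α) + ((1 - p) / p) * α))⁻¹ - 1)⁻¹ :=
  stmt3_general α p hα0 hα1 hcase
end

section
/- Let a, b ∈ (0,1), σ > 0, and let M be the 2×2 real matrix M = [[(1−a)σ^{−1}, aσ], [bσ^{−1}, (1−b)σ]]. Then the spectral radius of M (the maximum of the moduli of its complex eigenvalues) is strictly less than 1 if and only if σ lies strictly between 1 and (1−a)/(1−b) (i.e., 1 < σ < (1−a)/(1−b) when a < b, or (1−a)/(1−b) < σ < 1 when a > b). -/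
/-!
The spectrum of a real `2 × 2` matrix `A` consists of the roots of `z ^ 2 - T z + D` with
`T = tr A`, `D = det A`. When `D < 1`, both roots lie in the open unit disc iff `|T| < 1 + D`
(the Jury criterion): non-real roots have modulus `√D`, and real roots lie in `(-1, 1)` because
the polynomial is positive at `±1` (its values there are `1 ∓ T + D`) while the product of the
roots is `D < 1`. For `M` we have `D = 1 - a - b` and
`T = (1 - a) σ⁻¹ + (1 - b) σ`, and `1 + D - T = (1 - b) σ⁻¹ (σ - 1) ((1 - a) / (1 - b) - σ)`.
-/

open Complex

theorem abs_lt_one_of_sq_sub_mul_add_eq_zero {T D x : ℝ} (hD : D < 1) (hT : |T| < 1 + D)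
    (hx : x ^ 2 - T * x + D = 0) : |x| < 1 := by
  obtain ⟨hT₁, hT₂⟩ := abs_lt.mp hT
  have hright : 0 < (1 - x) * (1 - T + x) := by nlinarith
  have hleft : 0 < (1 + x) * (1 + T - x) := by nlinarith
  exact abs_lt.mpr ⟨by nlinarith, by nlinarith⟩

theorem norm_lt_one_of_sq_sub_mul_add_eq_zero {T D : ℝ} (hD : D < 1) (hT : |T| < 1 + D)
    {z : ℂ} (hz : z ^ 2 - T * z + D = 0) : ‖z‖ < 1 := by
  have hre : z.re ^ 2 - z.im ^ 2 - T * z.re + D = 0 := by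
    simpa [sq] using congrArg re hz
  have him : z.im * (2 * z.re - T) = 0 := by
    have := congrArg im hz
    simp only [sq, sub_im, add_im, mul_im, ofReal_re, ofReal_im, zero_mul, add_zero,
      zero_im] at this
    linear_combination this
  have hnorm : ‖z‖ ^ 2 = z.re ^ 2 + z.im ^ 2 := by linear_combination sq_norm_sub_sq_re z
  rw [← sq_lt_one_iff₀ (norm_nonneg z), hnorm]
  rcases mul_eq_zero.mp him with hreal | hre_half
  · have : |z.re| < 1 := abs_lt_one_of_sq_sub_mul_add_eq_zero hD hT (by simpa [hreal] using hre)
    rw [hreal, ← sq_abs]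
    nlinarith [abs_nonneg z.re]
  · linear_combination -hre + z.re * hre_half + hD

theorem exists_root_one_le_abs_of_one_add_le_abs {T D : ℝ} (h : 1 + D ≤ |T|) :
    ∃ x : ℝ, x ^ 2 - T * x + D = 0 ∧ 1 ≤ |x| := by
  have hdisc : 0 ≤ T ^ 2 - 4 * D := by nlinarith [sq_abs T, abs_nonneg T, sq_nonneg (1 - D)]
  have hs : √(T ^ 2 - 4 * D) ^ 2 = T ^ 2 - 4 * D := Real.sq_sqrt hdisc
  have hs₀ := Real.sqrt_nonneg (T ^ 2 - 4 * D)
  rcases le_abs'.mp h with hT | hT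
  · refine ⟨(T - √(T ^ 2 - 4 * D)) / 2, by linear_combination hs / 4, le_abs'.mpr (.inl ?_)⟩
    nlinarith
  · refine ⟨(T + √(T ^ 2 - 4 * D)) / 2, by linear_combination hs / 4, le_abs'.mpr (.inr ?_)⟩
    nlinarith

theorem forall_sq_sub_mul_add_eq_zero_norm_lt_one_iff {T D : ℝ} (hD : D < 1) :
    (∀ z : ℂ, z ^ 2 - T * z + D = 0 → ‖z‖ < 1) ↔ |T| < 1 + D := by
  refine ⟨fun h ↦ ?_, fun hT z ↦ norm_lt_one_of_sq_sub_mul_add_eq_zero hD hT⟩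
  by_contra! hT
  obtain ⟨x, hx, hx_abs⟩ := exists_root_one_le_abs_of_one_add_le_abs hT
  have := h x (by exact_mod_cast hx)
  rw [norm_real, Real.norm_eq_abs] at this
  linarith

theorem Matrix.mem_spectrum_iff_fin_two {K : Type*} [Field K] (A : Matrix (Fin 2) (Fin 2) K)
    (z : K) : z ∈ spectrum K A ↔ z ^ 2 - A.trace * z + A.det = 0 := by
  simp [mem_spectrum_iff_isRoot_charpoly, charpoly_fin_two]

theorem Matrix.forall_mem_spectrum_map_ofReal_norm_lt_one_iff (A : Matrix (Fin 2) (Fin 2) ℝ)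
    (hA : A.det < 1) :
    (∀ z ∈ spectrum ℂ (A.map ofReal), ‖z‖ < 1) ↔ |A.trace| < 1 + A.det := by
  have htrace : (A.map ofReal).trace = A.trace := (AddMonoidHom.map_trace ofRealHom A).symm
  have hdet : (A.map ofReal).det = A.det := (ofRealHom.map_det A).symm
  simp_rw [mem_spectrum_iff_fin_two, htrace, hdet]
  exact forall_sq_sub_mul_add_eq_zero_norm_lt_one_iff hA

theorem mul_inv_add_mul_lt_add_iff {p q σ : ℝ} (hq : 0 < q) (hσ : 0 < σ) :
    p * σ⁻¹ + q * σ < p + q ↔ (1 < σ ∧ σ < p / q) ∨ (p / q < σ ∧ σ < 1) := by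
  have hfactor : p * σ⁻¹ + q * σ - (p + q) = q / σ * ((σ - 1) * (σ - p / q)) := by
    field_simp
    ring
  rw [← sub_neg, hfactor, ← mul_zero (q / σ), mul_lt_mul_iff_right₀ (by positivity),
    mul_neg_iff, sub_pos, sub_neg, sub_neg, sub_pos, and_comm (a := σ < 1)]

/-- For `a, b ∈ (0,1)` and `σ > 0`, the spectral radius of the matrix
`M = [[(1-a)σ⁻¹, aσ], [bσ⁻¹, (1-b)σ]]` (the maximum of the moduli of its complex
eigenvalues) is strictly less than 1 iff `σ` lies strictly between `1` and
`(1-a)/(1-b)`. -/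
theorem stmt4 (a b σ : ℝ) (ha0 : 0 < a) (ha1 : a < 1) (hb0 : 0 < b) (hb1 : b < 1)
    (hσ : 0 < σ) :
    (∀ z ∈ spectrum ℂ
        ((Matrix.of ![![(1 - a) * σ⁻¹, a * σ], ![b * σ⁻¹, (1 - b) * σ]]).map
          (Complex.ofReal ·)),
      ‖z‖ < 1) ↔
      (1 < σ ∧ σ < (1 - a) / (1 - b)) ∨ ((1 - a) / (1 - b) < σ ∧ σ < 1) := by
  set M := Matrix.of ![![(1 - a) * σ⁻¹, a * σ], ![b * σ⁻¹, (1 - b) * σ]]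
  have htrace : M.trace = (1 - a) * σ⁻¹ + (1 - b) * σ := Matrix.trace_fin_two_of _ _ _ _
  have hdet : M.det = (1 - a) + (1 - b) - 1 := by
    rw [Matrix.det_fin_two_of]
    field_simp
    ring
  have htrace_pos : 0 < M.trace :=
    htrace ▸ add_pos (mul_pos (sub_pos.mpr ha1) (inv_pos.mpr hσ)) (mul_pos (sub_pos.mpr hb1) hσ)
  rw [M.forall_mem_spectrum_map_ofReal_norm_lt_one_iff (by linarith), abs_of_pos htrace_pos,
    htrace, hdet, add_sub_cancel, mul_inv_add_mul_lt_add_iff (sub_pos.mpr hb1) hσ]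
end

section
/- Let a, b ∈ (0,1), let p ∈ (0,1) be such that σ = (1−p)/p lies strictly between 1 and (1−a)/(1−b), let M = [[(1−a)σ^{−1}, aσ], [bσ^{−1}, (1−b)σ]], let π be the row vector (b/(a+b), a/(a+b)), and let 𝟙 = (1,1)ᵀ. Then I − M is invertible, 2·π(I−M)^{−1}𝟙 − 1 ≠ 0, and (2·π(I−M)^{−1}𝟙 − 1)^{−1} = (2p−1)·[(1−b)(1−p) − (1−a)p] / [(b + (a−b)/(a+b))(1−p) + (a − (a−b)/(a+b))p], and this quantity is strictly positive. -/
open Matrix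

/-!
With `D(σ) = (σ - 1)((1 - a) - (1 - b)σ)` one finds `σ · det (I - M) = D(σ)`, so the hypothesis on `σ`
is exactly `D(σ) > 0` and `I - M` is invertible. Cramer's rule for `2 × 2` matrices then gives
`2 E[S] - 1 = (1 + σ) F(σ) / D(σ)`, where `F(σ) = (b + c)σ + (a - c)` with `c = (a - b)/(a + b)`.
The affine function `F` is positive at both ends `1` and `(1 - a)/(1 - b)` of the window for `σ`
(its values there are `a + b` and `2ab(2 - a - b)/((a + b)(1 - b))`), hence positive inside it;
substituting `σ = (1 - p)/p` gives the stated formula for the drift.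
-/

/-- No invertibility hypothesis is needed: for singular `A` both sides are the junk value `0`. -/
theorem Matrix.dotProduct_inv_mulVec_fin_two {K : Type*} [Field K] (A : Matrix (Fin 2) (Fin 2) K)
    (v w : Fin 2 → K) :
    v ⬝ᵥ (A⁻¹ *ᵥ w) =
      (v 0 * (A 1 1 * w 0 - A 0 1 * w 1) + v 1 * (A 0 0 * w 1 - A 1 0 * w 0)) / A.det := by
  rw [inv_def, Ring.inverse_eq_inv', smul_mulVec, dotProduct_smul, adjugate_fin_two]
  simp only [dotProduct, mulVec, Fin.sum_univ_two, of_apply, cons_val_zero, cons_val_one,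
    smul_eq_mul]
  ring

theorem pos_of_affine_pos_of_between {α β x y z : ℝ} (hx : 0 < α * x + β) (hy : 0 < α * y + β)
    (hz : 0 < (z - x) * (y - z)) : 0 < α * z + β := by
  have interpolate : (α * z + β) * (y - x) ^ 2 =
      (α * x + β) * ((y - z) ^ 2 + (z - x) * (y - z)) +
        (α * y + β) * ((z - x) ^ 2 + (z - x) * (y - z)) := by ring
  have hrhs : 0 < (α * z + β) * (y - x) ^ 2 := by rw [interpolate]; positivity
  exact pos_of_mul_pos_left hrhs (sq_nonneg _)

noncomputable def swapMatrix (a b σ : ℝ) : Matrix (Fin 2) (Fin 2) ℝ :=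
  Matrix.of ![![(1 - a) * σ⁻¹, a * σ], ![b * σ⁻¹, (1 - b) * σ]]

section SwapEnvironment

variable {a b σ : ℝ}

theorem det_one_sub_swapMatrix (hσ : σ ≠ 0) :
    (1 - swapMatrix a b σ).det = (σ - 1) * ((1 - a) - (1 - b) * σ) / σ := by
  simp only [det_fin_two, swapMatrix, Matrix.sub_apply, of_apply, cons_val_zero, cons_val_one,
    one_apply_eq, one_apply_ne Fin.zero_ne_one, one_apply_ne Fin.zero_ne_one.symm]
  field_simp
  ring

theorem two_mul_dotProduct_inv_one_sub_swapMatrix_sub_one (hσ : σ ≠ 0) (hab : a + b ≠ 0)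
    (hD : (σ - 1) * ((1 - a) - (1 - b) * σ) ≠ 0) :
    2 * (![b / (a + b), a / (a + b)] ⬝ᵥ ((1 - swapMatrix a b σ)⁻¹ *ᵥ ![1, 1])) - 1 =
      (1 + σ) * ((b + (a - b) / (a + b)) * σ + (a - (a - b) / (a + b))) /
        ((σ - 1) * ((1 - a) - (1 - b) * σ)) := by
  obtain ⟨hσ1, hr⟩ := mul_ne_zero_iff.1 hD
  rw [dotProduct_inv_mulVec_fin_two, det_one_sub_swapMatrix hσ]
  simp only [swapMatrix, Matrix.sub_apply, of_apply, cons_val_zero, cons_val_one,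
    one_apply_eq, one_apply_ne Fin.zero_ne_one, one_apply_ne Fin.zero_ne_one.symm]
  field_simp
  ring

theorem mul_pos_of_between_one_and_ratio (hb1 : b < 1)
    (hbetween : (1 < σ ∧ σ < (1 - a) / (1 - b)) ∨ ((1 - a) / (1 - b) < σ ∧ σ < 1)) :
    0 < (σ - 1) * ((1 - a) - (1 - b) * σ) := by
  have h1b : 0 < 1 - b := by linarith
  rcases hbetween with ⟨h1, h2⟩ | ⟨h1, h2⟩
  · rw [lt_div_iff₀ h1b] at h2
    exact mul_pos (by linarith) (by linarith)
  · rw [div_lt_iff₀ h1b] at h1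
    exact mul_pos_of_neg_of_neg (by linarith) (by linarith)

theorem driftDenominator_pos (ha0 : 0 < a) (ha1 : a < 1) (hb0 : 0 < b) (hb1 : b < 1)
    (hD : 0 < (σ - 1) * ((1 - a) - (1 - b) * σ)) :
    0 < (b + (a - b) / (a + b)) * σ + (a - (a - b) / (a + b)) := by
  have hab : 0 < a + b := by linarith
  have h1b : 0 < 1 - b := by linarith
  have h2ab : 0 < 2 - a - b := by linarith
  have at_one : (b + (a - b) / (a + b)) * 1 + (a - (a - b) / (a + b)) = a + b := by ring
  have at_ratio : (b + (a - b) / (a + b)) * ((1 - a) / (1 - b)) + (a - (a - b) / (a + b)) =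
      2 * a * b * (2 - a - b) / ((a + b) * (1 - b)) := by
    field_simp
    ring
  have hσ : 0 < (σ - 1) * ((1 - a) / (1 - b) - σ) := by
    have hratio : (1 - a) - (1 - b) * σ = (1 - b) * ((1 - a) / (1 - b) - σ) := by field_simp
    rw [hratio, mul_left_comm] at hD
    exact pos_of_mul_pos_right hD h1b.le
  exact pos_of_affine_pos_of_between (by rw [at_one]; positivity) (by rw [at_ratio]; positivity) hσ

end SwapEnvironment

/-- For `a, b ∈ (0,1)` and `p ∈ (0,1)` such that `σ = (1-p)/p` lies
strictly between `1` and `(1-a)/(1-b)`, with `M = [[(1-a)σ⁻¹, aσ], [bσ⁻¹, (1-b)σ]]`,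
`π = (b/(a+b), a/(a+b))` and `𝟙 = (1,1)ᵀ`:  `I - M` is invertible,
`2 π (I-M)⁻¹ 𝟙 - 1 ≠ 0`, and
`(2 π (I-M)⁻¹ 𝟙 - 1)⁻¹ = (2p-1)[(1-b)(1-p)-(1-a)p] /
  [(b + (a-b)/(a+b))(1-p) + (a - (a-b)/(a+b))p] > 0`. -/
theorem stmt7 (a b p : ℝ) (ha0 : 0 < a) (ha1 : a < 1) (hb0 : 0 < b) (hb1 : b < 1)
    (hp0 : 0 < p) (hp1 : p < 1)
    (hbetween : (1 < (1 - p) / p ∧ (1 - p) / p < (1 - a) / (1 - b)) ∨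
      ((1 - a) / (1 - b) < (1 - p) / p ∧ (1 - p) / p < 1)) :
    let σ : ℝ := (1 - p) / p
    let M : Matrix (Fin 2) (Fin 2) ℝ :=
      Matrix.of ![![(1 - a) * σ⁻¹, a * σ], ![b * σ⁻¹, (1 - b) * σ]]
    let piv : Fin 2 → ℝ := ![b / (a + b), a / (a + b)]
    let ES : ℝ := piv ⬝ᵥ ((1 - M)⁻¹ *ᵥ ![1, 1])
    IsUnit (1 - M) ∧
    2 * ES - 1 ≠ 0 ∧
    (2 * ES - 1)⁻¹ = (2 * p - 1) * ((1 - b) * (1 - p) - (1 - a) * p) /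
      ((b + (a - b) / (a + b)) * (1 - p) + (a - (a - b) / (a + b)) * p) ∧
    0 < (2 * ES - 1)⁻¹ := by
  intro σ M piv ES
  have hσ : 0 < σ := div_pos (by linarith) hp0
  have hD := mul_pos_of_between_one_and_ratio hb1 hbetween
  have hF := driftDenominator_pos ha0 ha1 hb0 hb1 hD
  have hdrift : 2 * ES - 1 = (1 + σ) * ((b + (a - b) / (a + b)) * σ + (a - (a - b) / (a + b))) /
      ((σ - 1) * ((1 - a) - (1 - b) * σ)) :=
    two_mul_dotProduct_inv_one_sub_swapMatrix_sub_one hσ.ne' (by linarith) hD.ne'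
  have hdet : (1 - M).det ≠ 0 := by
    rw [show M = swapMatrix a b σ from rfl, det_one_sub_swapMatrix hσ.ne']
    positivity
  refine ⟨(isUnit_iff_isUnit_det _).2 hdet.isUnit, by rw [hdrift]; positivity, ?_,
    by rw [hdrift, inv_div]; positivity⟩
  rw [hdrift, inv_div]
  simp only [σ]
  field_simp
  ring
end

section
/- Let a_−, a_+, b_−, b_+ ∈ (0,1), σ > 0, and let N be the 4×4 matrix N = [[(1−a_−)σ^{−1}, a_−σ, 0, 0], [0, 0, b_−σ^{−1}, (1−b_−)σ], [(1−a_+)σ^{−1}, a_+σ, 0, 0], [0, 0, b_+σ^{−1}, (1−b_+)σ]]. Set A = a_− + a_+b_− − a_−b_− and B = b_+ + a_+b_− − a_+b_+. Then det(I − N) = −σ^{−1}(σ−1)·((1−B)σ − (1−A)). -/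
open Matrix

-- The sparsity pattern is that of a chain on pairs `(u, v) ∈ {-1, 1}²` (ordered
-- lexicographically) moving only from `(u, v)` to some `(v, w)`.
theorem Matrix.det_one_sub_fin_four_of_pairChain {R : Type*} [CommRing R]
    (x₀ y₀ z₀ w₀ x₁ y₁ z₁ w₁ : R) :
    (1 - of ![![x₀, y₀, 0, 0], ![0, 0, z₀, w₀], ![x₁, y₁, 0, 0], ![0, 0, z₁, w₁]]).det =
      (1 - x₀) * ((1 - w₁) * (1 - y₁ * z₀) - y₁ * z₁ * w₀)
        - x₁ * y₀ * ((1 - w₁) * z₀ + z₁ * w₀) := by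
  simp [det_succ_row_zero, Fin.sum_univ_succ, Fin.succAbove, one_apply]
  ring

theorem stmt12_general (am ap bm bp σ : ℝ)
    (hσ : 0 < σ) :
    let N : Matrix (Fin 4) (Fin 4) ℝ :=
      Matrix.of ![![(1 - am) * σ⁻¹, am * σ, 0, 0], ![0, 0, bm * σ⁻¹, (1 - bm) * σ],
                  ![(1 - ap) * σ⁻¹, ap * σ, 0, 0], ![0, 0, bp * σ⁻¹, (1 - bp) * σ]]
    let A : ℝ := am + ap * bm - am * bm
    let B : ℝ := bp + ap * bm - ap * bp
    (1 - N).det = -σ⁻¹ * (σ - 1) * ((1 - B) * σ - (1 - A)) := by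
  intro N A B
  rw [det_one_sub_fin_four_of_pairChain]
  field_simp
  ring

/-- For `a₋, a₊, b₋, b₊ ∈ (0,1)`, `σ > 0`, the 4×4 matrix
`N = [[(1-a₋)σ⁻¹, a₋σ, 0, 0], [0, 0, b₋σ⁻¹, (1-b₋)σ], [(1-a₊)σ⁻¹, a₊σ, 0, 0],
[0, 0, b₊σ⁻¹, (1-b₊)σ]]` satisfies `det (I - N) = -σ⁻¹ (σ-1) ((1-B)σ - (1-A))` where
`A = a₋ + a₊b₋ - a₋b₋` and `B = b₊ + a₊b₋ - a₊b₊`. -/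
theorem stmt12 (am ap bm bp σ : ℝ)
    (ham0 : 0 < am) (ham1 : am < 1) (hap0 : 0 < ap) (hap1 : ap < 1)
    (hbm0 : 0 < bm) (hbm1 : bm < 1) (hbp0 : 0 < bp) (hbp1 : bp < 1)
    (hσ : 0 < σ) :
    let N : Matrix (Fin 4) (Fin 4) ℝ :=
      Matrix.of ![![(1 - am) * σ⁻¹, am * σ, 0, 0], ![0, 0, bm * σ⁻¹, (1 - bm) * σ],
                  ![(1 - ap) * σ⁻¹, ap * σ, 0, 0], ![0, 0, bp * σ⁻¹, (1 - bp) * σ]]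
    let A : ℝ := am + ap * bm - am * bm
    let B : ℝ := bp + ap * bm - ap * bp
    (1 - N).det = -σ⁻¹ * (σ - 1) * ((1 - B) * σ - (1 - A)) :=
  stmt12_general am ap bm bp σ hσ
end
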